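/- Let d = pq with p, q positive integers, and for m ∈ ℤ_p, s ∈ ℤ_q let ψ_{ms} = (1/√q) ∑_{k∈ℤ_q} ω_q^{sk} a_{kp+m}. Then for every m ∈ ℤ_p, ∑_{s∈ℤ_q} |ψ_{ms}⟩⟨ψ_{ms}| = ∑_{k∈ℤ_q} |a_{kp+m}⟩⟨a_{kp+m}|, and for every s ∈ ℤ_q, ∑_{m∈ℤ_p} |ψ_{ms}⟩⟨ψ_{ms}| = ∑_{l∈ℤ_p} |b_{lq+s}⟩⟨b_{lq+s}|. -/
import Mathlib


open Complex Matrix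
open scoped ComplexOrder

noncomputable section

/-- `omega n = exp(2 π i / n)`, a primitive `n`-th root of unity. -/
def omega (n : ℕ) : ℂ := Complex.exp (2 * Real.pi * Complex.I / n)

/-- The standard basis vector `a i` of `ℂ^d`. -/
def stdVec (d : ℕ) (i : Fin d) : Fin d → ℂ := fun k => if k = i then 1 else 0

/-- The Fourier (DFT) basis vector `b j = (1/√d) ∑ i, ω_d^(i j) • a i`. -/
def fourierVec (d : ℕ) (j : Fin d) : Fin d → ℂ :=
  fun i => ((1 / Real.sqrt d : ℝ) : ℂ) * omega d ^ (i.val * j.val)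

/-- The rank-one projector `|v⟩⟨v|` of a vector `v`, as a matrix. -/
def proj (d : ℕ) (v : Fin d → ℂ) : Matrix (Fin d) (Fin d) ℂ :=
  Matrix.of fun i k => v i * (starRingEnd ℂ) (v k)

/-- The Kirkwood-Dirac quasiprobability `Q i j F = ⟨b j|a i⟩ * ⟨a i|F|b j⟩`. -/
def KDQ (d : ℕ) (F : Matrix (Fin d) (Fin d) ℂ) (i j : Fin d) : ℂ :=
  (starRingEnd ℂ) (fourierVec d j i) * ∑ k, F i k * fourierVec d j k

/-- The set `KD⁺` of KD classical density matrices: positive semidefinite, trace one,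
and all KD quasiprobabilities are nonnegative reals. -/
def KDplus (d : ℕ) : Set (Matrix (Fin d) (Fin d) ℂ) :=
  {ρ | ρ.PosSemidef ∧ ρ.trace = 1 ∧
    ∀ i j, (KDQ d ρ i j).im = 0 ∧ 0 ≤ (KDQ d ρ i j).re}

/-- The set `KD^r` of self-adjoint operators whose KD distribution is everywhere real. -/
def KDr (d : ℕ) : Set (Matrix (Fin d) (Fin d) ℂ) :=
  {F | F.IsHermitian ∧ ∀ i j, (KDQ d F i j).im = 0}

/-- `A = {|a i⟩⟨a i| : i ∈ ℤ_d}`. -/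
def setA (d : ℕ) : Set (Matrix (Fin d) (Fin d) ℂ) :=
  {M | ∃ i : Fin d, M = proj d (stdVec d i)}

/-- `B = {|b j⟩⟨b j| : j ∈ ℤ_d}`. -/
def setB (d : ℕ) : Set (Matrix (Fin d) (Fin d) ℂ) :=
  {M | ∃ j : Fin d, M = proj d (fourierVec d j)}

/-- For `d = p * q` : `ψ m s = (1/√q) ∑ k ∈ ℤ_q, ω_q^(s k) • a (k p + m)`
(so the `i`-th coordinate is nonzero iff `i ≡ m [MOD p]`, with `k = i / p`). -/
def psiPQ (d p q : ℕ) (m : Fin p) (s : Fin q) : Fin d → ℂ :=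
  fun i => if i.val % p = m.val then
    ((1 / Real.sqrt q : ℝ) : ℂ) * omega q ^ (s.val * (i.val / p)) else 0

/-- For `d = p * q` : `φ m' s' = (1/√p) ∑ k ∈ ℤ_p, ω_p^(s' k) • a (k q + m')`. -/
def phiPQ (d p q : ℕ) (m' : Fin q) (s' : Fin p) : Fin d → ℂ :=
  fun i => if i.val % q = m'.val then
    ((1 / Real.sqrt p : ℝ) : ℂ) * omega p ^ (s'.val * (i.val / q)) else 0

/-- For `d = p ^ 2` : `C = {|ψ m s⟩⟨ψ m s| : m, s ∈ ℤ_p}`. -/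
def setC2 (d p : ℕ) : Set (Matrix (Fin d) (Fin d) ℂ) :=
  {M | ∃ m s : Fin p, M = proj d (psiPQ d p p m s)}

/-- For `d = p * q` : `C = {|ψ m s⟩⟨ψ m s| : m ∈ ℤ_p, s ∈ ℤ_q}`. -/
def setC (d p q : ℕ) : Set (Matrix (Fin d) (Fin d) ℂ) :=
  {M | ∃ (m : Fin p) (s : Fin q), M = proj d (psiPQ d p q m s)}

/-- For `d = p * q` : `D = {|φ m' s'⟩⟨φ m' s'| : m' ∈ ℤ_q, s' ∈ ℤ_p}`. -/
def setD (d p q : ℕ) : Set (Matrix (Fin d) (Fin d) ℂ) :=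
  {M | ∃ (m' : Fin q) (s' : Fin p), M = proj d (phiPQ d p q m' s')}

/-- Matrix entries in the Fourier basis: `⟨b k|G|b j⟩`. -/
def entryB (d : ℕ) (G : Matrix (Fin d) (Fin d) ℂ) (k j : Fin d) : ℂ :=
  ∑ i, ∑ l, (starRingEnd ℂ) (fourierVec d k i) * G i l * fourierVec d j l

lemma omega_ne_zero (n : ℕ) : omega n ≠ 0 := Complex.exp_ne_zero _

lemma isPrimitiveRoot_omega (n : ℕ) (hn : 0 < n) : IsPrimitiveRoot (omega n) n :=
  Complex.isPrimitiveRoot_exp n hn.ne'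

lemma conj_omega (n : ℕ) : (starRingEnd ℂ) (omega n) = (omega n)⁻¹ := by
  unfold omega
  rw [← Complex.exp_conj, ← Complex.exp_neg]
  congr 1
  simp only [map_div₀, _root_.map_mul, Complex.conj_I, Complex.conj_ofReal, map_ofNat, map_natCast]
  ring

lemma omega_mul_conj (n : ℕ) (a b : ℕ) :
    omega n ^ a * (starRingEnd ℂ) (omega n ^ b) = omega n ^ ((a : ℤ) - b) := by
  rw [map_pow, conj_omega, ← zpow_natCast (omega n) a, ← zpow_natCast ((omega n)⁻¹) b,
    _root_.inv_zpow, ← _root_.zpow_neg, ← zpow_add₀ (omega_ne_zero n), sub_eq_add_neg]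

lemma sum_pow_unit (q : ℕ) (u : ℂ) (h : u ^ q = 1) :
    ∑ s : Fin q, u ^ (s : ℕ) = if u = 1 then (q : ℂ) else 0 := by
  rw [Fin.sum_univ_eq_sum_range]
  split_ifs with hu
  · simp [hu]
  · rw [geom_sum_eq hu, h]; simp

lemma omega_zpow_pow (n : ℕ) (k : ℤ) (j : ℕ) :
    (omega n ^ k) ^ j = omega n ^ (k * j) := by
  rw [← zpow_natCast (omega n ^ k), ← _root_.zpow_mul]

lemma key_sum (q : ℕ) (hq : 0 < q) (a b : ℕ) :
    ∑ s : Fin q, omega q ^ (s.val * a) * (starRingEnd ℂ) (omega q ^ (s.val * b)) =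
      if (q : ℤ) ∣ ((a : ℤ) - b) then (q : ℂ) else 0 := by
  have hterm : ∀ s : Fin q, omega q ^ (s.val * a) * (starRingEnd ℂ) (omega q ^ (s.val * b))
      = (omega q ^ ((a : ℤ) - b)) ^ (s : ℕ) := by
    intro s
    rw [omega_mul_conj, omega_zpow_pow]
    congr 1
    push_cast
    ring
  rw [Finset.sum_congr rfl (fun s _ => hterm s), sum_pow_unit]
  · simp only [(isPrimitiveRoot_omega q hq).zpow_eq_one_iff_dvd]
  · rw [omega_zpow_pow, mul_comm, _root_.zpow_mul, zpow_natCast,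
      (isPrimitiveRoot_omega q hq).pow_eq_one, _root_.one_zpow]

lemma omega_pow_mul (p q : ℕ) (hp : 0 < p) (hq : 0 < q) : omega (p * q) ^ q = omega p := by
  unfold omega
  rw [← Complex.exp_nat_mul]
  congr 1
  have hp' : (p : ℂ) ≠ 0 := Nat.cast_ne_zero.mpr hp.ne'
  have hq' : (q : ℂ) ≠ 0 := Nat.cast_ne_zero.mpr hq.ne'
  push_cast
  field_simp

lemma dvd_sub_iff (p a b : ℕ) : (p : ℤ) ∣ (a : ℤ) - b ↔ b % p = a % p :=
  Nat.modEq_iff_dvd.symm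

lemma lhs1 (p q d : ℕ) (hp : 0 < p) (hq : 0 < q) (hd : d = p * q) (m : Fin p) (i j : Fin d) :
    ∑ s : Fin q, psiPQ d p q m s i * (starRingEnd ℂ) (psiPQ d p q m s j) =
      if i = j ∧ i.val % p = m.val then 1 else 0 := by
  have hiq : i.val / p < q :=
    (Nat.div_lt_iff_lt_mul hp).mpr (by rw [mul_comm q p, ← hd]; exact i.isLt)
  have hjq : j.val / p < q :=
    (Nat.div_lt_iff_lt_mul hp).mpr (by rw [mul_comm q p, ← hd]; exact j.isLt)
  have hterm : ∀ s : Fin q, psiPQ d p q m s i * (starRingEnd ℂ) (psiPQ d p q m s j)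
      = if i.val % p = m.val ∧ j.val % p = m.val then
          Complex.ofReal (1 / (q : ℝ)) *
            (omega q ^ (s.val * (i.val / p)) *
              (starRingEnd ℂ) (omega q ^ (s.val * (j.val / p))))
        else 0 := by
    intro s
    simp only [psiPQ]
    by_cases h1 : i.val % p = m.val
    · by_cases h2 : j.val % p = m.val
      · rw [if_pos h1, if_pos h2, if_pos ⟨h1, h2⟩, _root_.map_mul, Complex.conj_ofReal,
          mul_mul_mul_comm, ← Complex.ofReal_mul, div_mul_div_comm, one_mul,
          Real.mul_self_sqrt (Nat.cast_nonneg q)]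
      · rw [if_pos h1, if_neg h2, if_neg (fun hc : _ ∧ _ => h2 hc.2), _root_.map_zero,
          mul_zero]
    · rw [if_neg h1, if_neg (fun hc : _ ∧ _ => h1 hc.1), zero_mul]
  rw [Finset.sum_congr rfl (fun s _ => hterm s)]
  by_cases hc : i.val % p = m.val ∧ j.val % p = m.val
  · simp only [if_pos hc]
    rw [← Finset.mul_sum, key_sum q hq]
    by_cases hij : i.val / p = j.val / p
    · have hij' : i = j := by
        apply Fin.ext
        conv_lhs => rw [← Nat.div_add_mod i.val p]
        conv_rhs => rw [← Nat.div_add_mod j.val p]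
        rw [hij, hc.1, hc.2]
      have hq0 : (q : ℂ) ≠ 0 := Nat.cast_ne_zero.mpr hq.ne'
      rw [if_pos (by rw [hij, sub_self]; exact dvd_zero _ : (q : ℤ) ∣ ((i.val / p : ℕ) : ℤ) - ((j.val / p : ℕ) : ℤ)),
        if_pos ⟨hij', hc.1⟩]
      push_cast
      field_simp
    · have h1 : ¬ (q : ℤ) ∣ ((i.val / p : ℕ) : ℤ) - ((j.val / p : ℕ) : ℤ) := by
        rw [dvd_sub_iff, Nat.mod_eq_of_lt hiq, Nat.mod_eq_of_lt hjq]
        exact fun hh => hij hh.symm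
      rw [if_neg h1, mul_zero, if_neg (fun hc2 => hij (by rw [hc2.1]))]
  · simp only [if_neg hc]
    rw [Finset.sum_const_zero, if_neg (fun h => hc ⟨h.2, by rw [← h.1]; exact h.2⟩)]

lemma idx_val (p q d : ℕ) (hd : d = p * q) (m : Fin p) (k : Fin q) :
    (k.val * p + m.val) % d = k.val * p + m.val := by
  apply Nat.mod_eq_of_lt
  have h1 : k.val * p + m.val < (k.val + 1) * p := by
    rw [add_mul, one_mul]; exact Nat.add_lt_add_left m.isLt _
  have h2 : (k.val + 1) * p ≤ q * p := Nat.mul_le_mul_right _ (Nat.succ_le_of_lt k.isLt)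
  rw [hd, mul_comm p q]; omega

lemma rhs1 (p q d : ℕ) (hp : 0 < p) (hq : 0 < q) (hd : d = p * q) (m : Fin p)
    (idx : Fin q → Fin d) (hidx : ∀ k, (idx k).val = k.val * p + m.val) (i j : Fin d) :
    ∑ k : Fin q, stdVec d (idx k) i * (starRingEnd ℂ) (stdVec d (idx k) j) =
      if i = j ∧ i.val % p = m.val then 1 else 0 := by
  have hterm : ∀ k : Fin q, stdVec d (idx k) i * (starRingEnd ℂ) (stdVec d (idx k) j)
      = if i = idx k ∧ j = idx k then 1 else 0 := by
    intro k
    simp only [stdVec]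
    split_ifs with h1 h2 h3 <;> simp_all
  rw [Finset.sum_congr rfl (fun k _ => hterm k)]
  have hdivk : ∀ k : Fin q, (idx k).val / p = k.val := by
    intro k
    rw [hidx, mul_comm, Nat.mul_add_div hp, Nat.div_eq_of_lt m.isLt, add_zero]
  by_cases h : i = j ∧ i.val % p = m.val
  · obtain ⟨rfl, h2⟩ := h
    rw [if_pos ⟨rfl, h2⟩]
    have hk0lt : i.val / p < q :=
      (Nat.div_lt_iff_lt_mul hp).mpr (by rw [mul_comm q p, ← hd]; exact i.isLt)
    set k0 : Fin q := ⟨i.val / p, hk0lt⟩ with hk0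
    have hik0 : i = idx k0 := by
      apply Fin.ext
      rw [hidx]
      conv_lhs => rw [← Nat.div_add_mod i.val p]
      rw [h2, mul_comm]
    rw [Finset.sum_eq_single k0]
    · rw [if_pos ⟨hik0, hik0⟩]
    · intro k _ hk
      rw [if_neg]
      rintro ⟨h1', -⟩
      apply hk
      apply Fin.ext
      have hdk := hdivk k
      rw [← h1'] at hdk
      rw [← hdk, hk0]
    · intro hmem
      exact absurd (Finset.mem_univ k0) hmem
  · rw [if_neg h, Finset.sum_eq_zero]
    intro k _
    rw [if_neg]
    rintro ⟨hik, hjk⟩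
    apply h
    refine ⟨hik.trans hjk.symm, ?_⟩
    rw [hik, hidx, mul_comm, Nat.mul_add_mod, Nat.mod_eq_of_lt m.isLt]

lemma lhs2 (p q d : ℕ) (hp : 0 < p) (hq : 0 < q) (hd : d = p * q) (s : Fin q) (i j : Fin d) :
    ∑ m : Fin p, psiPQ d p q m s i * (starRingEnd ℂ) (psiPQ d p q m s j) =
      if i.val % p = j.val % p then
        Complex.ofReal (1 / (q : ℝ)) *
          omega q ^ ((s.val : ℤ) * ((i.val / p : ℕ) : ℤ) - (s.val : ℤ) * ((j.val / p : ℕ) : ℤ))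
      else 0 := by
  have hterm : ∀ m : Fin p, psiPQ d p q m s i * (starRingEnd ℂ) (psiPQ d p q m s j)
      = if i.val % p = m.val ∧ j.val % p = m.val then
          Complex.ofReal (1 / (q : ℝ)) *
            omega q ^ ((s.val : ℤ) * ((i.val / p : ℕ) : ℤ) - (s.val : ℤ) * ((j.val / p : ℕ) : ℤ))
        else 0 := by
    intro m
    simp only [psiPQ]
    by_cases h1 : i.val % p = m.val
    case neg => rw [if_neg h1, if_neg (fun hc : _ ∧ _ => h1 hc.1), zero_mul]
    by_cases h2 : j.val % p = m.val
    case neg =>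
      rw [if_pos h1, if_neg h2, if_neg (fun hc : _ ∧ _ => h2 hc.2), _root_.map_zero, mul_zero]
    · rw [if_pos h1, if_pos h2, if_pos ⟨h1, h2⟩, _root_.map_mul, Complex.conj_ofReal,
        mul_mul_mul_comm, ← Complex.ofReal_mul, div_mul_div_comm, one_mul,
        Real.mul_self_sqrt (Nat.cast_nonneg q), omega_mul_conj,
        show ((s.val * (i.val / p) : ℕ) : ℤ) - ((s.val * (j.val / p) : ℕ) : ℤ)
            = (s.val : ℤ) * ((i.val / p : ℕ) : ℤ) - (s.val : ℤ) * ((j.val / p : ℕ) : ℤ) by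
          push_cast; ring]
  rw [Finset.sum_congr rfl (fun m _ => hterm m)]
  by_cases h : i.val % p = j.val % p
  · rw [if_pos h, Finset.sum_eq_single (⟨i.val % p, Nat.mod_lt _ hp⟩ : Fin p)]
    · rw [if_pos ⟨rfl, h.symm⟩]
    · intro m _ hm
      rw [if_neg]
      rintro ⟨h1', -⟩
      exact hm (Fin.ext h1'.symm)
    · intro hmem
      exact absurd (Finset.mem_univ _) hmem
  · rw [if_neg h, Finset.sum_eq_zero]
    intro m _
    rw [if_neg]
    rintro ⟨h1', h2'⟩
    exact h (h1'.trans h2'.symm)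

lemma rhs2 (p q d : ℕ) (hp : 0 < p) (hq : 0 < q) (hd : d = p * q)
    (s : Fin q) (idx : Fin p → Fin d) (hidx : ∀ l, (idx l).val = l.val * q + s.val)
    (i j : Fin d) :
    ∑ l : Fin p, fourierVec d (idx l) i * (starRingEnd ℂ) (fourierVec d (idx l) j) =
      if i.val % p = j.val % p then
        Complex.ofReal (1 / (q : ℝ)) *
          omega q ^ ((s.val : ℤ) * ((i.val / p : ℕ) : ℤ) - (s.val : ℤ) * ((j.val / p : ℕ) : ℤ))
      else 0 := by
  have hd0 : 0 < d := by rw [hd]; exact Nat.mul_pos hp hq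
  have hq' : (q : ℤ) ≠ 0 := Int.natCast_ne_zero.mpr hq.ne'
  have hterm : ∀ l : Fin p,
      fourierVec d (idx l) i * (starRingEnd ℂ) (fourierVec d (idx l) j)
      = Complex.ofReal (1 / (d : ℝ)) * omega d ^ (((i.val : ℤ) - j.val) * s.val)
          * (omega d ^ (((i.val : ℤ) - j.val) * q)) ^ (l.val) := by
    intro l
    simp only [fourierVec, hidx]
    rw [_root_.map_mul, Complex.conj_ofReal, mul_mul_mul_comm, ← Complex.ofReal_mul,
      div_mul_div_comm, one_mul, Real.mul_self_sqrt (Nat.cast_nonneg d),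
      omega_mul_conj, omega_zpow_pow, mul_assoc, ← zpow_add₀ (omega_ne_zero d),
      show ((i.val : ℤ) - j.val) * s.val + ((i.val : ℤ) - j.val) * q * l.val
          = ((i.val * (l.val * q + s.val) : ℕ) : ℤ) - ((j.val * (l.val * q + s.val) : ℕ) : ℤ) by
        push_cast; ring]
  rw [Finset.sum_congr rfl (fun l _ => hterm l), ← Finset.mul_sum,
    sum_pow_unit p _ (by
      rw [omega_zpow_pow,
        show ((i.val : ℤ) - j.val) * q * p = (d : ℤ) * ((i.val : ℤ) - j.val) by
          push_cast [hd]; ring,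
        _root_.zpow_mul, zpow_natCast, (isPrimitiveRoot_omega d hd0).pow_eq_one,
        _root_.one_zpow])]
  have hiff : (omega d ^ (((i.val : ℤ) - j.val) * q) = 1) ↔ (i.val % p = j.val % p) := by
    rw [(isPrimitiveRoot_omega d hd0).zpow_eq_one_iff_dvd,
      show (d : ℤ) = (p : ℤ) * q by push_cast [hd]; ring,
      mul_dvd_mul_iff_right hq', dvd_sub_iff, eq_comm]
  by_cases h : i.val % p = j.val % p
  · rw [if_pos (hiff.mpr h), if_pos h]
    have key : (i.val : ℤ) - j.val
        = (p : ℤ) * (((i.val / p : ℕ) : ℤ) - ((j.val / p : ℕ) : ℤ)) := by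
      have h1 : (i.val : ℤ) = p * ((i.val / p : ℕ) : ℤ) + ((i.val % p : ℕ) : ℤ) := by
        exact_mod_cast (Nat.div_add_mod i.val p).symm
      have h2 : (j.val : ℤ) = p * ((j.val / p : ℕ) : ℤ) + ((j.val % p : ℕ) : ℤ) := by
        exact_mod_cast (Nat.div_add_mod j.val p).symm
      rw [h1, h2, h]
      ring
    have hbase : omega d ^ (p : ℕ) = omega q := by
      rw [hd, mul_comm p q]
      exact omega_pow_mul q p hq hp
    have e1 : omega d ^ (((i.val : ℤ) - j.val) * s.val)
        = omega q ^ ((s.val : ℤ) * ((i.val / p : ℕ) : ℤ) - (s.val : ℤ) * ((j.val / p : ℕ) : ℤ)) := by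
      rw [show ((i.val : ℤ) - j.val) * s.val
          = (p : ℤ) * ((s.val : ℤ) * ((i.val / p : ℕ) : ℤ) - (s.val : ℤ) * ((j.val / p : ℕ) : ℤ)) by
            rw [key]; ring,
        _root_.zpow_mul, zpow_natCast, hbase]
    have e2 : Complex.ofReal (1 / (d : ℝ)) * (p : ℂ) = Complex.ofReal (1 / (q : ℝ)) := by
      have hp' : (p : ℂ) ≠ 0 := Nat.cast_ne_zero.mpr hp.ne'
      have hq'' : (q : ℂ) ≠ 0 := Nat.cast_ne_zero.mpr hq.ne'
      push_cast [hd]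
      field_simp
    rw [e1, mul_right_comm, e2]
  · rw [if_neg (fun hh => h (hiff.mp hh)), if_neg h, mul_zero]


/-- For `d = pq` (`p, q` positive integers):
for every `m ∈ ℤ_p`, `∑_{s ∈ ℤ_q} |ψ_{ms}⟩⟨ψ_{ms}| = ∑_{k ∈ ℤ_q} |a_{kp+m}⟩⟨a_{kp+m}|`,
and for every `s ∈ ℤ_q`, `∑_{m ∈ ℤ_p} |ψ_{ms}⟩⟨ψ_{ms}| = ∑_{l ∈ ℤ_p} |b_{lq+s}⟩⟨b_{lq+s}|`. -/
theorem stmt14 (p q d : ℕ) (hp : 0 < p) (hq : 0 < q) (hd : d = p * q) :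
    (∀ m : Fin p,
      ∑ s : Fin q, proj d (psiPQ d p q m s) =
        ∑ k : Fin q, proj d (stdVec d
          ⟨(k.val * p + m.val) % d, Nat.mod_lt _ (by rw [hd]; exact Nat.mul_pos hp hq)⟩)) ∧
    (∀ s : Fin q,
      ∑ m : Fin p, proj d (psiPQ d p q m s) =
        ∑ l : Fin p, proj d (fourierVec d
          ⟨(l.val * q + s.val) % d, Nat.mod_lt _ (by rw [hd]; exact Nat.mul_pos hp hq)⟩)) := by
  constructor
  · intro m
    ext i j
    simp only [Matrix.sum_apply, proj, Matrix.of_apply]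
    rw [lhs1 p q d hp hq hd m i j,
      rhs1 p q d hp hq hd m _ (fun k => idx_val p q d hd m k) i j]
  · intro s
    ext i j
    simp only [Matrix.sum_apply, proj, Matrix.of_apply]
    rw [lhs2 p q d hp hq hd s i j]
    exact (rhs2 p q d hp hq hd s _
      (fun l => idx_val q p d (by rw [hd, mul_comm]) s l) i j).symm
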